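/- Let (V, ≤, ℓ) be a finite {a, b}-labeled DAG. Then V has a topological sort whose achieved word contains aa as a factor if and only if there exist distinct vertices v₁, v₂ with ℓ(v₁) = ℓ(v₂) = a such that either v₁ and v₂ are incomparable, or v₁ < v₂ and there is no vertex w with v₁ < w < v₂. -/

import Mathlib

/-!
In a topological sort `l ++ v₁ :: v₂ :: r`, `v₂ < v₁` is impossible and nothing can lie strictly
between `v₁` and `v₂`, so the two are incomparable or `v₁ ⋖ v₂`. Conversely, choose `D` such that
`D`, `D ∪ {v₁}` and `D ∪ {v₁, v₂}` are lower sets (`Iio v₁ ∪ Iio v₂` for an incomparable pair,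
`Iio v₂ \ Ici v₁` for a covering pair): listing `D`, then `v₁`, `v₂`, then the rest, each block in
the order of a fixed linear extension, gives a topological sort.
-/

namespace CTS

/-- The two-letter alphabet `{a, b}`. -/
inductive AB : Type
  | a : AB
  | b : AB
deriving DecidableEq

/-- A topological sort of the finite partial order `V`: a duplicate-free list containing
every element, such that whenever `u < v`, `u` occurs before `v`. -/
def IsTopSort {V : Type*} [PartialOrder V] (σ : List V) : Prop :=
  σ.Nodup ∧ (∀ v : V, v ∈ σ) ∧ σ.Pairwise (fun u v => ¬ v < u)

theorem _root_.List.exists_map_eq_append_pair_append_iff {α β : Type*} {f : α → β} {σ : List α}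
    {x y : β} :
    (∃ p s, σ.map f = p ++ [x, y] ++ s) ↔
      ∃ l u v r, σ = l ++ u :: v :: r ∧ f u = x ∧ f v = y := by
  constructor
  · rintro ⟨p, s, h⟩
    obtain ⟨m, ⟨l, r, rfl⟩, hm⟩ := List.infix_map_iff.1 ⟨p, s, h.symm⟩
    obtain ⟨u, v, rfl, rfl, rfl⟩ : ∃ u v, m = [u, v] ∧ f u = x ∧ f v = y := by
      simpa [List.map_eq_cons_iff, eq_comm] using hm
    exact ⟨l, u, v, r, by simp, rfl, rfl⟩
  · rintro ⟨l, u, v, r, rfl, rfl, rfl⟩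
    exact ⟨l.map f, r.map f, by simp⟩

theorem _root_.IsLowerSet.insert_of_Iio_subset {V : Type*} [PartialOrder V] {s : Set V}
    (hs : IsLowerSet s) {a : V} (ha : Set.Iio a ⊆ s) : IsLowerSet (insert a s) := by
  rintro x y hyx (rfl | hx)
  · rcases hyx.lt_or_eq with h | rfl
    exacts [Or.inr (ha h), Or.inl rfl]
  · exact Or.inr (hs hyx hx)

section
variable {V : Type*} [PartialOrder V]

theorem exists_isTopSort [Fintype V] : ∃ τ : List V, IsTopSort τ := by
  let _ : Fintype (LinearExtension V) := ‹Fintype V›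
  let τ : List (LinearExtension V) := Finset.univ.sort (· ≤ ·)
  have hsorted : τ.Pairwise (· ≤ ·) := Finset.pairwise_sort _ _
  have hnodup : τ.Nodup := Finset.sort_nodup _ _
  have hmem (v : LinearExtension V) : v ∈ τ := (Finset.mem_sort _).2 (Finset.mem_univ v)
  refine ⟨τ, hnodup, hmem, hsorted.imp fun {u v} huv (hvu : (v : V) < u) => ?_⟩
  exact not_lt_of_ge huv (lt_of_le_of_ne (toLinearExtension.monotone hvu.le) hvu.ne)

theorem IsTopSort.incomparable_or_covBy {l r : List V} {v₁ v₂ : V}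
    (h : IsTopSort (l ++ v₁ :: v₂ :: r)) :
    v₁ ≠ v₂ ∧ ((¬ v₁ ≤ v₂ ∧ ¬ v₂ ≤ v₁) ∨ v₁ ⋖ v₂) := by
  obtain ⟨hnodup, hmem, hpw⟩ := h
  simp only [List.pairwise_append, List.pairwise_cons, List.mem_cons] at hpw
  obtain ⟨-, ⟨hv₁, hv₂, -⟩, hcross⟩ := hpw
  have hne : v₁ ≠ v₂ := by
    rintro rfl
    simp [List.nodup_append] at hnodup
  have h21 : ¬ v₂ < v₁ := hv₁ v₂ (Or.inl rfl)
  refine ⟨hne, ?_⟩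
  by_cases h12 : v₁ ≤ v₂
  · refine Or.inr ⟨h12.lt_of_ne hne, fun w h1w hw2 => ?_⟩
    have hw := hmem w
    simp only [List.mem_append, List.mem_cons] at hw
    rcases hw with hw | rfl | rfl | hw
    · exact hcross w hw v₁ (Or.inl rfl) h1w
    · exact h1w.false
    · exact hw2.false
    · exact hv₂ w hw hw2
  · exact Or.inl ⟨h12, fun h => h21 (h.lt_of_ne hne.symm)⟩

theorem exists_isTopSort_adjacent_of_isLowerSet [Fintype V] {D : Set V} (hD : IsLowerSet D)
    {v₁ v₂ : V} (hv₁ : v₁ ∉ D) (hv₂ : v₂ ∉ insert v₁ D) (hlt₁ : Set.Iio v₁ ⊆ D)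
    (hlt₂ : Set.Iio v₂ ⊆ insert v₁ D) :
    ∃ l r : List V, IsTopSort (l ++ v₁ :: v₂ :: r) := by
  classical
  obtain ⟨τ, hnodup, hmem, hpw⟩ := exists_isTopSort (V := V)
  have hE₁ : IsLowerSet (insert v₁ D) := hD.insert_of_Iio_subset hlt₁
  have hE₂ : IsLowerSet (insert v₂ (insert v₁ D)) := hE₁.insert_of_Iio_subset hlt₂
  have hbelow {S : Set V} (hS : IsLowerSet S) {x y : V} (hx : x ∈ S) (hy : y ∉ S) : ¬ y < x :=
    fun hyx => hy (hS hyx.le hx)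
  obtain ⟨hv₂₁, hv₂D⟩ : v₂ ≠ v₁ ∧ v₂ ∉ D := by simpa using hv₂
  refine ⟨τ.filter (· ∈ D), τ.filter (· ∉ insert v₂ (insert v₁ D)), ?_, fun v => ?_, ?_⟩
  · rw [List.nodup_append, List.nodup_cons, List.nodup_cons]
    refine ⟨hnodup.filter _, ⟨by simp [hv₂₁.symm], by simp, hnodup.filter _⟩, ?_⟩
    simp only [List.mem_filter, List.mem_cons, decide_eq_true_eq]
    rintro a ⟨-, ha⟩ b (rfl | rfl | ⟨-, hb⟩)
    exacts [ne_of_mem_of_not_mem ha hv₁, ne_of_mem_of_not_mem ha hv₂D,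
      ne_of_mem_of_not_mem ha fun h => hb (by simp [h])]
  · simp only [List.mem_append, List.mem_cons, List.mem_filter, hmem, true_and,
      decide_eq_true_eq, Set.mem_insert_iff]
    tauto
  · simp only [List.pairwise_append, List.pairwise_cons, List.mem_cons, List.mem_filter,
      decide_eq_true_eq]
    refine ⟨hpw.filter _, ⟨?_, fun a ha => hbelow hE₂ (by simp) ha.2, hpw.filter _⟩, ?_⟩
    · rintro a (rfl | ⟨-, ha⟩)
      exacts [hbelow hE₁ (by simp) hv₂, hbelow hE₂ (by simp) ha]
    · rintro a ⟨-, ha⟩ b (rfl | rfl | ⟨-, hb⟩)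
      exacts [hbelow hD ha hv₁, hbelow hD ha hv₂D, hbelow hD ha fun h => hb (by simp [h])]

theorem exists_isTopSort_adjacent_iff [Fintype V] {v₁ v₂ : V} :
    (∃ l r : List V, IsTopSort (l ++ v₁ :: v₂ :: r)) ↔
      v₁ ≠ v₂ ∧ ((¬ v₁ ≤ v₂ ∧ ¬ v₂ ≤ v₁) ∨ v₁ ⋖ v₂) := by
  refine ⟨fun ⟨l, r, h⟩ => h.incomparable_or_covBy, ?_⟩
  rintro ⟨hne, ⟨h12, h21⟩ | hcov⟩
  · refine exists_isTopSort_adjacent_of_isLowerSet (D := Set.Iio v₁ ∪ Set.Iio v₂)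
      ((isLowerSet_Iio v₁).union (isLowerSet_Iio v₂)) ?_ ?_ Set.subset_union_left
      (Set.subset_union_right.trans (Set.subset_insert _ _))
    · simpa using fun h => h12 h.le
    · simpa [hne.symm] using fun h => h21 h.le
  · refine exists_isTopSort_adjacent_of_isLowerSet (D := Set.Iio v₂ \ Set.Ici v₁)
      ((isLowerSet_Iio v₂).inter (isUpperSet_Ici v₁).compl) (by simp) (by simp [hne.symm])
      (fun x hx => ⟨hx.trans hcov.lt, not_le_of_gt hx⟩) fun x hx => ?_
    by_cases h : v₁ ≤ x
    · exact Or.inl (h.eq_of_not_lt fun h1x => hcov.2 h1x hx).symm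
    · exact Or.inr ⟨hx, h⟩

end

/-- a finite `{a,b}`-labeled DAG has a topological sort whose achieved word
contains `aa` as a factor iff there are two distinct `a`-labeled vertices that are either
incomparable, or comparable with nothing strictly between them. -/
theorem stmt11 {V : Type*} [Fintype V] [PartialOrder V] (ℓ : V → AB) :
    (∃ σ : List V, IsTopSort σ ∧
        ∃ p s : List AB, σ.map ℓ = p ++ [AB.a, AB.a] ++ s) ↔
      ∃ v₁ v₂ : V, v₁ ≠ v₂ ∧ ℓ v₁ = AB.a ∧ ℓ v₂ = AB.a ∧
        ((¬ v₁ ≤ v₂ ∧ ¬ v₂ ≤ v₁) ∨ (v₁ < v₂ ∧ ¬ ∃ w : V, v₁ < w ∧ w < v₂)) := by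
  have hcovBy (v₁ v₂ : V) : (v₁ < v₂ ∧ ¬ ∃ w, v₁ < w ∧ w < v₂) ↔ v₁ ⋖ v₂ := by
    simp [CovBy]
  simp only [List.exists_map_eq_append_pair_append_iff, hcovBy]
  constructor
  · rintro ⟨_, hσ, l, v₁, v₂, r, rfl, h₁, h₂⟩
    obtain ⟨hne, hrel⟩ := hσ.incomparable_or_covBy
    exact ⟨v₁, v₂, hne, h₁, h₂, hrel⟩
  · rintro ⟨v₁, v₂, hne, h₁, h₂, hrel⟩
    obtain ⟨l, r, hσ⟩ := exists_isTopSort_adjacent_iff.2 ⟨hne, hrel⟩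
    exact ⟨_, hσ, l, v₁, v₂, r, rfl, h₁, h₂⟩

end CTS
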